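/- arXiv:2510.25525 — 2 statements merged into one kernel-verified Lean document; each statement's English description precedes it below -/
import Mathlib

section
/- For every Schwartz function φ ∈ S(ℝⁿ), the random variable ω ↦ ⟨ω,φ⟩ on (Ω,P) has expectation zero: ∫_Ω ⟨ω,φ⟩ P(dω) = 0. -/
/-!
Put `X ω = ⟨ω, φ⟩`. By the Bochner–Minlos identity applied to `t • φ`, the characteristic function
of `X` is `t ↦ exp (∫ Ψ (t φ x) dx)`, and `|Ψ w| ≤ 2 M w²` makes the exponent `O(t²)`, so the
characteristic function has derivative `0` at `0`. When `X` is integrable that derivative is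
`i E[X]`; when it is not, `∫ X dP = 0` holds by the junk-value convention of the Bochner integral.
-/

open MeasureTheory Complex

noncomputable section

/-- The space ℝⁿ. -/
abbrev En (n : ℕ) := EuclideanSpace ℝ (Fin n)

/-- The white noise probability space Ω = 𝒮'(ℝⁿ), the space of tempered
distributions (the continuous dual of the Schwartz space), with the weak* topology. -/
abbrev WNSpace (n : ℕ) := WeakDual ℝ (SchwartzMap (En n) ℝ)

/-- The Borel σ-algebra on Ω. -/
instance (n : ℕ) : MeasurableSpace (WNSpace n) := borel _

/-- The Lévy exponent Ψ(w) = ∫ (e^{iwz} − 1 − iwz) ν(dz). -/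
def levyExponent (ν : Measure ℝ) (w : ℝ) : ℂ :=
  ∫ z : ℝ, (Complex.exp (Complex.I * w * z) - 1 - Complex.I * w * z) ∂ν

open Topology

theorem Complex.norm_exp_I_mul_ofReal_sub_one_sub_le (x : ℝ) :
    ‖exp (I * x) - 1 - I * x‖ ≤ 2 * x ^ 2 := by
  rcases le_total |x| 1 with hx | hx
  · have h := norm_exp_sub_one_sub_id_le (x := I * x) (by simpa using hx)
    simp only [norm_mul, norm_I, one_mul, norm_real, Real.norm_eq_abs, sq_abs] at h
    linarith [sq_nonneg x]
  · calc ‖exp (I * x) - 1 - I * x‖ ≤ ‖exp (I * x) - 1‖ + ‖I * x‖ := norm_sub_le _ _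
      _ ≤ |x| + |x| := by
          gcongr
          · simpa using Real.norm_exp_I_mul_ofReal_sub_one_le (x := x)
          · simp
      _ ≤ 2 * x ^ 2 := by nlinarith [sq_abs x]

lemma norm_levyExponent_le {ν : Measure ℝ} (hM : Integrable (fun z : ℝ => z ^ 2) ν) (w : ℝ) :
    ‖levyExponent ν w‖ ≤ 2 * (∫ z, z ^ 2 ∂ν) * w ^ 2 := by
  have hbound : ∀ z : ℝ, ‖exp (I * w * z) - 1 - I * w * z‖ ≤ 2 * w ^ 2 * z ^ 2 := fun z => by
    simpa [mul_assoc, mul_pow, mul_left_comm] using norm_exp_I_mul_ofReal_sub_one_sub_le (w * z)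
  calc ‖levyExponent ν w‖ ≤ ∫ z, 2 * w ^ 2 * z ^ 2 ∂ν :=
        norm_integral_le_of_norm_le (hM.const_mul _) (.of_forall hbound)
    _ = 2 * (∫ z, z ^ 2 ∂ν) * w ^ 2 := by rw [integral_const_mul]; ring

lemma isBigO_integral_levyExponent {α : Type*} [MeasurableSpace α] {μ : Measure α}
    {ν : Measure ℝ} (hM : Integrable (fun z : ℝ => z ^ 2) ν) {f : α → ℝ}
    (hf : Integrable (fun x => f x ^ 2) μ) :
    (fun t : ℝ => ∫ x, levyExponent ν (t * f x) ∂μ) =O[𝓝 0] fun t => t ^ 2 := by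
  refine .of_bound (2 * (∫ z, z ^ 2 ∂ν) * ∫ x, f x ^ 2 ∂μ) (.of_forall fun t => ?_)
  calc ‖∫ x, levyExponent ν (t * f x) ∂μ‖ ≤ ∫ x, 2 * (∫ z, z ^ 2 ∂ν) * t ^ 2 * f x ^ 2 ∂μ :=
        norm_integral_le_of_norm_le (hf.const_mul _) (.of_forall fun x => by
          simpa [mul_pow, mul_assoc] using norm_levyExponent_le hM (t * f x))
    _ = 2 * (∫ z, z ^ 2 ∂ν) * (∫ x, f x ^ 2 ∂μ) * ‖t ^ 2‖ := by
        rw [integral_const_mul, norm_pow, Real.norm_eq_abs, sq_abs]; ring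

lemma hasDerivAt_charFun_zero {μ : Measure ℝ} [IsFiniteMeasure μ] (h : Integrable id μ) :
    HasDerivAt (charFun μ) (I * ∫ x, x ∂μ) 0 := by
  have h1 : MemLp id (1 : ℕ) μ := by simpa using memLp_one_iff_integrable.2 h
  have hdiff : Differentiable ℝ (charFun μ) := (contDiff_charFun h1).differentiable one_ne_zero
  have hderiv := iteratedDeriv_charFun_zero h1
  rw [iteratedDeriv_one] at hderiv
  simpa [hderiv] using (hdiff 0).hasDerivAt

lemma integral_id_eq_zero_of_charFun_eq_exp {μ : Measure ℝ} [IsFiniteMeasure μ] {g : ℝ → ℂ}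
    (hg : g =O[𝓝 0] fun t => t ^ 2) (hμ : ∀ t, charFun μ t = exp (g t)) :
    ∫ x, x ∂μ = 0 := by
  by_cases hμint : Integrable id μ
  swap
  · exact integral_undef hμint
  have hg0 : g 0 = 0 := by simpa using hg.eq_zero_imp.self_of_nhds
  have hg' : HasDerivAt g 0 0 := by
    rw [hasDerivAt_iff_isLittleO]
    simpa [hg0] using hg.trans_isLittleO (Asymptotics.isLittleO_pow_id one_lt_two)
  have hexp : HasDerivAt (charFun μ) 0 0 := by
    simpa [funext hμ, hg0] using hg'.cexp
  simpa using (hasDerivAt_charFun_zero hμint).unique hexp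

lemma WNSpace.measurable_eval {n : ℕ} (φ : SchwartzMap (En n) ℝ) :
    Measurable fun ω : WNSpace n => ω φ :=
  (WeakDual.eval_continuous φ).borel_measurable

lemma charFun_map_eval_eq_exp {n : ℕ} {ν : Measure ℝ} {P : Measure (WNSpace n)}
    (hBM : ∀ φ : SchwartzMap (En n) ℝ,
      ∫ ω : WNSpace n, Complex.exp (Complex.I * (ω φ : ℝ)) ∂P
        = Complex.exp (∫ x : En n, levyExponent ν (φ x)))
    (φ : SchwartzMap (En n) ℝ) (t : ℝ) :
    charFun (P.map fun ω => ω φ) t = exp (∫ x : En n, levyExponent ν (t * φ x)) := by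
  rw [charFun_apply_real, integral_map (WNSpace.measurable_eval φ).aemeasurable (by fun_prop)]
  have h := hBM (t • φ)
  simp only [smul_apply, smul_eq_mul, map_smul] at h
  rw [← h]
  congr with ω
  push_cast
  rw [mul_comm]

theorem expectation_pairing_eq_zero_general
    (n : ℕ)
    (ν : Measure ℝ)
    (hM : Integrable (fun z : ℝ => z ^ 2) ν)
    (P : Measure (WNSpace n)) [IsProbabilityMeasure P]
    (hBM : ∀ φ : SchwartzMap (En n) ℝ,
      ∫ ω : WNSpace n, Complex.exp (Complex.I * (ω φ : ℝ)) ∂P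
        = Complex.exp (∫ x : En n, levyExponent ν (φ x))) :
    ∀ φ : SchwartzMap (En n) ℝ, ∫ ω : WNSpace n, ω φ ∂P = 0 := by
  intro φ
  calc ∫ ω, ω φ ∂P = ∫ x, x ∂(P.map fun ω => ω φ) :=
        (integral_map (WNSpace.measurable_eval φ).aemeasurable aestronglyMeasurable_id).symm
    _ = 0 := integral_id_eq_zero_of_charFun_eq_exp
        (isBigO_integral_levyExponent hM (φ.memLp 2).integrable_sq)
        (charFun_map_eval_eq_exp hBM φ)

theorem expectation_pairing_eq_zero
    (n : ℕ) (hn : 1 ≤ n)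
    (ν : Measure ℝ) (hν0 : ν {0} = 0)
    (hM : Integrable (fun z : ℝ => z ^ 2) ν)
    (P : Measure (WNSpace n)) [IsProbabilityMeasure P]
    (hBM : ∀ φ : SchwartzMap (En n) ℝ,
      ∫ ω : WNSpace n, Complex.exp (Complex.I * (ω φ : ℝ)) ∂P
        = Complex.exp (∫ x : En n, levyExponent ν (φ x))) :
    ∀ φ : SchwartzMap (En n) ℝ, ∫ ω : WNSpace n, ω φ ∂P = 0 :=
  expectation_pairing_eq_zero_general n ν hM P hBM
end
end

section
/- Let {η_m}_{m ≥ 0} ⊂ L²(ρ) be an orthogonal family of nonzero elements whose linear span is dense in L²(ρ) (e.g. the orthogonalization of {1, z, z², …}). Define p_j(z) := ‖η_{j−1}‖_{L²(ρ)}^{−1} · z · η_{j−1}(z) for j = 1, 2, …. Then {p_j}_{j ≥ 1} is an orthonormal basis of L²(ν): it is orthonormal in L²(ν) and its linear span is dense in L²(ν). -/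
/-!
Multiplication by `z` is an isometry from `L²(z² ν)` to `L²(ν)`, and it is onto because `ν {0} = 0`
(its inverse is division by `z`). It sends `η_j` to `‖η_j‖ p_j`, so the orthonormality of the `p_j`
is that of the normalized `η_j`, and the span of the `p_j` contains the image of a dense set under a
continuous surjection, which is dense.
-/

namespace MeasureTheory

variable {α : Type*} [MeasurableSpace α] {ν ρ : Measure α} {w : α → ℝ}

theorem integral_withDensity_sq (hw : Measurable w)
    (hρ : ρ = ν.withDensity fun x => ENNReal.ofReal (w x ^ 2)) (g : α → ℝ) :
    ∫ x, g x ∂ρ = ∫ x, w x ^ 2 * g x ∂ν := by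
  subst hρ
  refine (integral_withDensity_eq_integral_smul (μ := ν) (hw.pow_const 2).real_toNNReal g).trans ?_
  simp only [NNReal.smul_def, Real.coe_toNNReal _ (sq_nonneg _), smul_eq_mul]

theorem eLpNorm_two_mul_eq (hw : Measurable w)
    (hρ : ρ = ν.withDensity fun x => ENNReal.ofReal (w x ^ 2)) (u : α → ℝ) :
    eLpNorm (fun x => w x * u x) 2 ν = eLpNorm u 2 ρ := by
  subst hρ
  simp only [eLpNorm_eq_lintegral_rpow_enorm_toReal two_ne_zero ENNReal.ofNat_ne_top,
    ENNReal.toReal_ofNat, ENNReal.rpow_ofNat]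
  rw [lintegral_withDensity_eq_lintegral_mul_non_measurable _ (hw.pow_const 2).ennreal_ofReal
    (.of_forall fun _ => ENNReal.ofReal_lt_top)]
  congr 2 with x
  rw [Pi.mul_apply, enorm_mul, mul_pow, Real.enorm_eq_ofReal_abs,
    ← ENNReal.ofReal_pow (abs_nonneg _), sq_abs]

theorem mul_ae_eq_of_ae_eq_withDensity_sq (hw : Measurable w)
    (hρ : ρ = ν.withDensity fun x => ENNReal.ofReal (w x ^ 2)) {u v : α → ℝ}
    (huv : u =ᵐ[ρ] v) : (fun x => w x * u x) =ᵐ[ν] fun x => w x * v x := by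
  subst hρ
  rw [Filter.EventuallyEq, ae_withDensity_iff (hw.pow_const 2).ennreal_ofReal] at huv
  filter_upwards [huv] with x hx
  by_cases hw0 : w x = 0
  · simp [hw0]
  · rw [hx (by positivity)]

theorem AEStronglyMeasurable.mul_of_withDensity_sq (hw : Measurable w)
    (hρ : ρ = ν.withDensity fun x => ENNReal.ofReal (w x ^ 2)) {u : α → ℝ}
    (hu : AEStronglyMeasurable u ρ) : AEStronglyMeasurable (fun x => w x * u x) ν :=
  (hw.aestronglyMeasurable.mul hu.stronglyMeasurable_mk.aestronglyMeasurable).congr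
    (mul_ae_eq_of_ae_eq_withDensity_sq hw hρ hu.ae_eq_mk).symm

theorem MemLp.mul_of_withDensity_sq (hw : Measurable w)
    (hρ : ρ = ν.withDensity fun x => ENNReal.ofReal (w x ^ 2)) {u : α → ℝ}
    (hu : MemLp u 2 ρ) : MemLp (fun x => w x * u x) 2 ν :=
  ⟨hu.1.mul_of_withDensity_sq hw hρ, (eLpNorm_two_mul_eq hw hρ u).trans_lt hu.2⟩

theorem MemLp.inv_mul_withDensity_sq (hw : Measurable w)
    (hρ : ρ = ν.withDensity fun x => ENNReal.ofReal (w x ^ 2)) (hw0 : ∀ᵐ x ∂ν, w x ≠ 0)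
    {F : α → ℝ} (hF : MemLp F 2 ν) : MemLp (fun x => (w x)⁻¹ * F x) 2 ρ := by
  have hwF : (fun x => w x * ((w x)⁻¹ * F x)) =ᵐ[ν] F := by
    filter_upwards [hw0] with x hx
    rw [mul_inv_cancel_left₀ hx]
  refine ⟨?_, ?_⟩
  · rw [hρ]
    exact (hw.inv.aestronglyMeasurable.mul hF.1).mono_ac (withDensity_absolutelyContinuous _ _)
  · rw [← eLpNorm_two_mul_eq hw hρ, eLpNorm_congr_ae hwF]
    exact hF.2

noncomputable def mulLp (hw : Measurable w)
    (hρ : ρ = ν.withDensity fun x => ENNReal.ofReal (w x ^ 2)) (F : Lp ℝ 2 ρ) : Lp ℝ 2 ν :=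
  ((Lp.memLp F).mul_of_withDensity_sq hw hρ).toLp _

theorem coeFn_mulLp (hw : Measurable w)
    (hρ : ρ = ν.withDensity fun x => ENNReal.ofReal (w x ^ 2)) (F : Lp ℝ 2 ρ) :
    mulLp hw hρ F =ᵐ[ν] fun x => w x * F x :=
  MemLp.coeFn_toLp _

theorem isometry_mulLp (hw : Measurable w)
    (hρ : ρ = ν.withDensity fun x => ENNReal.ofReal (w x ^ 2)) :
    Isometry (mulLp hw hρ) := by
  refine Isometry.of_dist_eq fun F G => ?_
  have hsub : ⇑(mulLp hw hρ F) - ⇑(mulLp hw hρ G) =ᵐ[ν] fun x => w x * (F - G : α → ℝ) x := by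
    filter_upwards [coeFn_mulLp hw hρ F, coeFn_mulLp hw hρ G] with x hF hG
    simp only [Pi.sub_apply, hF, hG, mul_sub]
  rw [Lp.dist_def, Lp.dist_def, eLpNorm_congr_ae hsub, eLpNorm_two_mul_eq hw hρ]

theorem surjective_mulLp (hw : Measurable w)
    (hρ : ρ = ν.withDensity fun x => ENNReal.ofReal (w x ^ 2)) (hw0 : ∀ᵐ x ∂ν, w x ≠ 0) :
    Function.Surjective (mulLp hw hρ) := by
  intro F
  have hG := (Lp.memLp F).inv_mul_withDensity_sq hw hρ hw0
  refine ⟨hG.toLp _, Lp.ext ?_⟩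
  filter_upwards [coeFn_mulLp hw hρ (hG.toLp _),
    mul_ae_eq_of_ae_eq_withDensity_sq hw hρ hG.coeFn_toLp, hw0] with x hmul hG hx
  rw [hmul, hG, mul_inv_cancel_left₀ hx]

theorem integral_mul_mul_eq_integral_withDensity_sq (hw : Measurable w)
    (hρ : ρ = ν.withDensity fun x => ENNReal.ofReal (w x ^ 2)) (u v : α → ℝ) :
    ∫ x, w x * u x * (w x * v x) ∂ν = ∫ x, u x * v x ∂ρ := by
  rw [integral_withDensity_sq hw hρ]
  congr 1 with x
  ring

theorem dense_span_mul_of_dense_span (hw : Measurable w)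
    (hρ : ρ = ν.withDensity fun x => ENNReal.ofReal (w x ^ 2)) (hw0 : ∀ᵐ x ∂ν, w x ≠ 0)
    {ι : Type*} {η : ι → α → ℝ}
    (hη : Dense {F : Lp ℝ 2 ρ | ∃ g ∈ Submodule.span ℝ (Set.range η), F =ᵐ[ρ] g}) :
    Dense {F : Lp ℝ 2 ν |
      ∃ g ∈ Submodule.span ℝ (Set.range fun i => w * η i), F =ᵐ[ν] g} := by
  refine ((surjective_mulLp hw hρ hw0).denseRange.dense_image
    (isometry_mulLp hw hρ).continuous hη).mono ?_
  rintro _ ⟨F, ⟨g, hg, hFg⟩, rfl⟩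
  refine ⟨w * g, ?_, (coeFn_mulLp hw hρ F).trans (mul_ae_eq_of_ae_eq_withDensity_sq hw hρ hFg)⟩
  have := Submodule.mem_map_of_mem (f := LinearMap.mulLeft ℝ w) hg
  rwa [Submodule.map_span, ← Set.range_comp] at this

theorem integral_sq_pos_of_not_ae_eq_zero {μ : Measure α} {f : α → ℝ} (hf : MemLp f 2 μ)
    (hf0 : ¬ f =ᵐ[μ] 0) : 0 < ∫ x, f x ^ 2 ∂μ := by
  refine (integral_nonneg fun x => sq_nonneg (f x)).lt_of_ne fun h => hf0 ?_
  filter_upwards [(integral_eq_zero_iff_of_nonneg (fun x => sq_nonneg (f x))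
    hf.integrable_sq).mp h.symm] with x hx
  exact pow_eq_zero_iff two_ne_zero |>.mp hx

theorem integral_normalized_mul_normalized {μ : Measure α} {ι : Type*} [DecidableEq ι]
    {η : ι → α → ℝ} (hmem : ∀ i, MemLp (η i) 2 μ) (hne : ∀ i, ¬ η i =ᵐ[μ] 0)
    (horth : ∀ i j, i ≠ j → ∫ x, η i x * η j x ∂μ = 0) (i j : ι) :
    ∫ x, (√(∫ t, η i t ^ 2 ∂μ))⁻¹ * η i x * ((√(∫ t, η j t ^ 2 ∂μ))⁻¹ * η j x) ∂μ
      = if i = j then 1 else 0 := by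
  have hmul : ∀ x, (√(∫ t, η i t ^ 2 ∂μ))⁻¹ * η i x * ((√(∫ t, η j t ^ 2 ∂μ))⁻¹ * η j x)
      = (√(∫ t, η i t ^ 2 ∂μ))⁻¹ * (√(∫ t, η j t ^ 2 ∂μ))⁻¹ * (η i x * η j x) := fun x => by
    ring
  simp only [hmul, integral_const_mul]
  split_ifs with hij
  · subst hij
    have hpos := integral_sq_pos_of_not_ae_eq_zero (hmem i) (hne i)
    simp only [← sq]
    rw [inv_pow, Real.sq_sqrt hpos.le, inv_mul_cancel₀ hpos.ne']
  · rw [horth i j hij, mul_zero]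

end MeasureTheory

open MeasureTheory

theorem p_family_orthonormal_basis_of_L2nu_general
    (ν : Measure ℝ) (hν0 : ν {0} = 0)
    -- ρ(dz) = z² ν(dz):
    (ρ : Measure ℝ) (hρ : ρ = ν.withDensity fun z => ENNReal.ofReal (z ^ 2))
    -- {η_m}_{m ≥ 0} ⊂ L²(ρ) : an orthogonal family of nonzero elements with dense span
    -- (here η m corresponds to η_m, m = 0, 1, 2, …):
    (η : ℕ → ℝ → ℝ)
    (hηmem : ∀ m, MemLp (η m) 2 ρ)
    (hηne : ∀ m, ¬ (η m =ᵐ[ρ] (fun _ => (0 : ℝ))))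
    (hηorth : ∀ m m', m ≠ m' → ∫ z : ℝ, η m z * η m' z ∂ρ = 0)
    (hηdense : Dense {F : Lp ℝ 2 ρ |
      ∃ g ∈ Submodule.span ℝ (Set.range η), ⇑F =ᵐ[ρ] g})
    -- p_j(z) = ‖η_{j-1}‖_{L²(ρ)}⁻¹ · z · η_{j-1}(z) for j = 1, 2, …
    -- (here p j corresponds to p_{j+1}, j = 0, 1, 2, …):
    (p : ℕ → ℝ → ℝ)
    (hp : ∀ j z, p j z = (Real.sqrt (∫ t : ℝ, (η j t) ^ 2 ∂ρ))⁻¹ * (z * η j z)) :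
    -- {p_j}_{j ≥ 1} is an orthonormal basis of L²(ν): it belongs to L²(ν),
    -- is orthonormal there, and its linear span is dense in L²(ν):
    (∀ j, MemLp (p j) 2 ν) ∧
    (∀ j j', ∫ z : ℝ, p j z * p j' z ∂ν = if j = j' then 1 else 0) ∧
    Dense {F : Lp ℝ 2 ν | ∃ g ∈ Submodule.span ℝ (Set.range p), ⇑F =ᵐ[ν] g} := by
  have hc : ∀ j, √(∫ t, η j t ^ 2 ∂ρ) ≠ 0 := fun j =>
    (Real.sqrt_pos.mpr (integral_sq_pos_of_not_ae_eq_zero (hηmem j) (hηne j))).ne'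
  have hp' : ∀ j, p j = (√(∫ t, η j t ^ 2 ∂ρ))⁻¹ • fun z => z * η j z := fun j => funext (hp j)
  refine ⟨fun j => ?_, fun j j' => ?_, ?_⟩
  · rw [hp']
    exact ((hηmem j).mul_of_withDensity_sq measurable_id hρ).const_smul _
  · rw [← integral_normalized_mul_normalized hηmem hηne hηorth,
      ← integral_mul_mul_eq_integral_withDensity_sq (w := id) measurable_id hρ]
    congr 1 with z
    rw [hp, hp, id]
    ring
  · refine (dense_span_mul_of_dense_span measurable_id hρ (compl_mem_ae_iff.mpr hν0)
      hηdense).mono ?_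
    rintro F ⟨g, hg, hFg⟩
    refine ⟨g, Submodule.span_le.mpr ?_ hg, hFg⟩
    rintro _ ⟨j, rfl⟩
    have hηp : id * η j = √(∫ t, η j t ^ 2 ∂ρ) • p j := by
      rw [hp', smul_inv_smul₀ (hc j)]
      rfl
    simp only [SetLike.mem_coe, hηp]
    exact Submodule.smul_mem _ _ (Submodule.subset_span ⟨j, rfl⟩)

theorem p_family_orthonormal_basis_of_L2nu
    (ν : Measure ℝ) (hν0 : ν {0} = 0)
    (hM : Integrable (fun z : ℝ => z ^ 2) ν)
    -- ρ(dz) = z² ν(dz):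
    (ρ : Measure ℝ) (hρ : ρ = ν.withDensity fun z => ENNReal.ofReal (z ^ 2))
    -- {η_m}_{m ≥ 0} ⊂ L²(ρ) : an orthogonal family of nonzero elements with dense span
    -- (here η m corresponds to η_m, m = 0, 1, 2, …):
    (η : ℕ → ℝ → ℝ)
    (hηmem : ∀ m, MemLp (η m) 2 ρ)
    (hηne : ∀ m, ¬ (η m =ᵐ[ρ] (fun _ => (0 : ℝ))))
    (hηorth : ∀ m m', m ≠ m' → ∫ z : ℝ, η m z * η m' z ∂ρ = 0)
    (hηdense : Dense {F : Lp ℝ 2 ρ |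
      ∃ g ∈ Submodule.span ℝ (Set.range η), ⇑F =ᵐ[ρ] g})
    -- p_j(z) = ‖η_{j-1}‖_{L²(ρ)}⁻¹ · z · η_{j-1}(z) for j = 1, 2, …
    -- (here p j corresponds to p_{j+1}, j = 0, 1, 2, …):
    (p : ℕ → ℝ → ℝ)
    (hp : ∀ j z, p j z = (Real.sqrt (∫ t : ℝ, (η j t) ^ 2 ∂ρ))⁻¹ * (z * η j z)) :
    -- {p_j}_{j ≥ 1} is an orthonormal basis of L²(ν): it belongs to L²(ν),
    -- is orthonormal there, and its linear span is dense in L²(ν):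
    (∀ j, MemLp (p j) 2 ν) ∧
    (∀ j j', ∫ z : ℝ, p j z * p j' z ∂ν = if j = j' then 1 else 0) ∧
    Dense {F : Lp ℝ 2 ν | ∃ g ∈ Submodule.span ℝ (Set.range p), ⇑F =ᵐ[ν] g} :=
  p_family_orthonormal_basis_of_L2nu_general ν hν0 ρ hρ η hηmem hηne hηorth hηdense p hp
end
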